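/- Let G be a regular framified constraint graph, let u be a node in the repetitive part of G, and let x, y ∈ R satisfy ℓ((u,x),(u,y)) = ∞. Then G does not satisfy condition (★): there exist a node v, registers z, z' ∈ R, an infinite word w, an infinite forward path f along w from (v,z), and an infinite backward path b along w from (v,z'), with a strict edge from f(i) to b(i) for every i, such that f or b uses infinitely many strict edges. -/

import Mathlib

namespace ConstraintGraphs

/-- Nodes of the infinite `n`-ary tree: finite words over `{1,…,n}`. -/
abbrev Node (n : ℕ) := List (Fin n)

/-- Vertices: pairs of a tree node and a register. -/
abbrev Vtx (n : ℕ) (R : Type) := Node n × R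

/-- `IsChild v u` : the word `v` is a child of the word `u`. -/
def IsChild {n : ℕ} (v u : Node n) : Prop := ∃ γ : Fin n, v = u ++ [γ]

/-- A tree-structured constraint graph on the vertex set `[n]* × R`:
two edge relations (strict edges `lt` and equality edges `eqe`) such that
every edge joins vertices lying at the same node or at a parent/child pair. -/
structure CGraph (n : ℕ) (R : Type) where
  lt : Vtx n R → Vtx n R → Prop
  eqe : Vtx n R → Vtx n R → Prop
  local_edges : ∀ a b : Vtx n R, lt a b ∨ eqe a b →
    a.1 = b.1 ∨ IsChild b.1 a.1 ∨ IsChild a.1 b.1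

variable {n : ℕ} {R : Type}

/-- `p 0, …, p k` is a (finite) path in `G`. -/
def CGraph.IsPathTo (G : CGraph n R) (p : ℕ → Vtx n R) (k : ℕ) : Prop :=
  ∀ i < k, G.lt (p i) (p (i + 1)) ∨ G.eqe (p i) (p (i + 1))

/-- The strict length of the finite path `p 0, …, p k`:
the number of indices `i < k` where a strict edge is used. -/
noncomputable def CGraph.strictLen (G : CGraph n R) (p : ℕ → Vtx n R) (k : ℕ) : ℕ :=
  Set.ncard {i : ℕ | i < k ∧ G.lt (p i) (p (i + 1))}

/-- The word `w₁ ⋯ w_i` (the first `i` letters of the infinite word `w`). -/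
def wpfx (w : ℕ → Fin n) (i : ℕ) : Node n := (List.range i).map w

/-- A violation of condition (★) for the pair of relations `slt` (strict edges)
and `seq` (equality edges): a node `u`, registers `x, y`, an infinite word `w`,
an infinite forward path `f` from `(u,x)` along `w` and an infinite backward
path `b` from `(u,y)` along `w`, with a strict edge from `f i` to `b i` for every
`i`, such that `f` or `b` uses infinitely many strict edges. -/
def StarViol (slt seq : Vtx n R → Vtx n R → Prop) : Prop :=
  ∃ (u : Node n) (x y : R) (w : ℕ → Fin n) (f b : ℕ → Vtx n R),
    f 0 = (u, x) ∧ b 0 = (u, y) ∧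
    (∀ i : ℕ, (f i).1 = u ++ wpfx w i) ∧
    (∀ i : ℕ, (b i).1 = u ++ wpfx w i) ∧
    (∀ i : ℕ, slt (f i) (f (i + 1)) ∨ seq (f i) (f (i + 1))) ∧
    (∀ i : ℕ, slt (b (i + 1)) (b i) ∨ seq (b (i + 1)) (b i)) ∧
    (∀ i : ℕ, slt (f i) (b i)) ∧
    ((∀ N : ℕ, ∃ i, N ≤ i ∧ slt (f i) (f (i + 1))) ∨
      (∀ N : ℕ, ∃ i, N ≤ i ∧ slt (b (i + 1)) (b i)))

/-- Condition (★) for a tree-structured constraint graph. -/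
def Star (G : CGraph n R) : Prop := ¬ StarViol G.lt G.eqe

/-- The label set 𝐔: `below` is U_{<c₀}, `above` is U_{c_α<}, and `atc c` is U_c. -/
inductive ULab where
  | below : ULab
  | above : ULab
  | atc : ℤ → ULab

/-- `inBag v a` : the vertex `a` lies in the bag of the node `v`
(i.e. `a` lies at `v` or at the parent of `v`). -/
def inBag (v : Node n) (a : Vtx n R) : Prop := a.1 = v ∨ IsChild v a.1

/-- A framified constraint graph: a tree-structured constraint graph together with
a total labeling by 𝐔 (with the integer labels in `[c₀, c_α]`), such that every
edge has both endpoints in a common bag, and for all distinct vertices in a common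
bag conditions (1)–(5) of the definition of frames hold. -/
structure Framified (n : ℕ) (R : Type) (c₀ cα : ℤ) extends CGraph n R where
  lab : Vtx n R → ULab
  lab_mem : ∀ (v : Vtx n R) (c : ℤ), lab v = ULab.atc c → c₀ ≤ c ∧ c ≤ cα
  edge_bag : ∀ a b : Vtx n R, lt a b ∨ eqe a b → ∃ v : Node n, inBag v a ∧ inBag v b
  complete : ∀ (v : Node n) (a b : Vtx n R), inBag v a → inBag v b → a ≠ b →
    lt a b ∨ lt b a ∨ eqe a b ∨ eqe b a
  no_bag_cycle : ∀ v : Node n,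
    ¬ ∃ (k : ℕ) (p : ℕ → Vtx n R), 0 < k ∧ p 0 = p k ∧
      (∀ i < k, lt (p i) (p (i + 1)) ∨ eqe (p i) (p (i + 1))) ∧
      (∃ i < k, lt (p i) (p (i + 1))) ∧ (∀ i ≤ k, inBag v (p i))
  eq_symm : ∀ (v : Node n) (a b : Vtx n R), inBag v a → inBag v b → a ≠ b →
    eqe a b → eqe b a
  eq_lab : ∀ (v : Node n) (a b : Vtx n R), inBag v a → inBag v b → a ≠ b →
    eqe a b → lab a = lab b
  lab_eq : ∀ (v : Node n) (a b : Vtx n R), inBag v a → inBag v b → a ≠ b →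
    ∀ c : ℤ, lab a = ULab.atc c → lab b = ULab.atc c → eqe a b
  lt_lab : ∀ (v : Node n) (a b : Vtx n R), inBag v a → inBag v b → a ≠ b →
    lt a b → lab a = ULab.below ∨ lab b = ULab.above ∨
      ∃ c c' : ℤ, lab a = ULab.atc c ∧ lab b = ULab.atc c' ∧ c < c'

/-- Embeddability into ℤ of a framified constraint graph. -/
def Framified.Embeddable {c₀ cα : ℤ} (G : Framified n R c₀ cα) : Prop :=
  ∃ κ : Vtx n R → ℤ,
    (∀ a b : Vtx n R, G.lt a b → κ a < κ b) ∧
    (∀ a b : Vtx n R, G.eqe a b → κ a = κ b) ∧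
    (∀ (v : Vtx n R) (c : ℤ), G.lab v = ULab.atc c → κ v = c)

/-- `ℓ((u,x),(u,y)) = ∞` : for every `m` there is a cycle-free path in `G` from
`(u,x)` to `(u,y)` of strict length at least `m` staying in the subtree rooted at `u`. -/
def EllInf {c₀ cα : ℤ} (G : Framified n R c₀ cα) (u : Node n) (x y : R) : Prop :=
  ∀ m : ℕ, ∃ (k : ℕ) (p : ℕ → Vtx n R),
    p 0 = (u, x) ∧ p k = (u, y) ∧ G.toCGraph.IsPathTo p k ∧
    (∀ i j : ℕ, i ≤ k → j ≤ k → p i = p j → i = j) ∧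
    (∀ i ≤ k, u <+: (p i).1) ∧
    m ≤ G.toCGraph.strictLen p k

/-- The subtree of `G` rooted at `u`: its strict edges, equality edges and labeling,
transported to the root. -/
def subtreeAt {c₀ cα : ℤ} (G : Framified n R c₀ cα) (u : Node n) :
    (Vtx n R → Vtx n R → Prop) × (Vtx n R → Vtx n R → Prop) × (Vtx n R → ULab) :=
  ⟨fun a b => G.lt (u ++ a.1, a.2) (u ++ b.1, b.2),
   fun a b => G.eqe (u ++ a.1, a.2) (u ++ b.1, b.2),
   fun a => G.lab (u ++ a.1, a.2)⟩

/-- `G` is regular if it has only finitely many distinct subtrees. -/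
def Regular {c₀ cα : ℤ} (G : Framified n R c₀ cα) : Prop :=
  (Set.range (subtreeAt G)).Finite

/-- `w` is in the repetitive part of `G` if the subtree rooted at `w` equals the
subtree rooted at some proper prefix of `w`. -/
def InRepetitive {c₀ cα : ℤ} (G : Framified n R c₀ cα) (w : Node n) : Prop :=
  ∃ u : Node n, u <+: w ∧ u ≠ w ∧ subtreeAt G u = subtreeAt G w


/-!
A cycle-free path from `(u, x)` to `(u, y)` below `u` with many strict edges is folded into a
*comb*: nodes `v₀ = u, v₁, v₂, …` along a word, with strict teeth `(vᵢ, xᵢ) < (vᵢ, yᵢ)`, a forward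
spine `xᵢ → xᵢ₊₁` and a backward spine `yᵢ₊₁ → yᵢ`. Completeness and acyclicity of bags let any
walk that stays below a node and returns to it be replaced by a single edge between its ends,
strict as soon as the walk was strict. Hence an excursion of the path into a child `v ++ [γ]`
gives one rung of the comb, and the walk inside the excursion continues it one level deeper.
As the path is cycle-free it visits `v` at most `|R|` times, so some excursion keeps a `1/|R|`
share of the strict edges not touching `v`; this is why `(3|R|)^(σ+1)` strict edges produce
`σ` strict rungs. By regularity only finitely many triples (subtree at `vᵢ`, `xᵢ`, `yᵢ`) occur, so
two strict rungs start from the same triple, and repeating the segment between them forever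
yields the two infinite paths that violate (★).
-/

variable {c₀ cα : ℤ}

theorem exists_first_after {P : ℕ → Prop} {t b : ℕ} (htb : t < b) (hb : P b) :
    ∃ j, t < j ∧ j ≤ b ∧ P j ∧ ∀ i, t < i → i < j → ¬ P i := by
  classical
  have hex : ∃ j, t < j ∧ P j := ⟨b, htb, hb⟩
  exact ⟨Nat.find hex, (Nat.find_spec hex).1, Nat.find_min' hex ⟨htb, hb⟩,
    (Nat.find_spec hex).2, fun i hti hij hi => Nat.find_min hex hij ⟨hti, hi⟩⟩

section Nodes

def Adjacent (x y : Node n) : Prop := x = y ∨ IsChild y x ∨ IsChild x y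

namespace Adjacent

variable {x y v : Node n} {γ : Fin n}

theorem length_le (h : Adjacent x y) : x.length ≤ y.length + 1 := by
  rcases h with rfl | ⟨δ, rfl⟩ | ⟨δ, rfl⟩
  · simp
  · simp
    omega
  · simp

theorem exists_child (h : Adjacent v y) (hv : v <+: y) (hne : y ≠ v) :
    ∃ γ, y = v ++ [γ] := by
  rcases h with rfl | hc | ⟨δ, rfl⟩
  · exact absurd rfl hne
  · exact hc
  · simpa using hv.length_le

theorem prefix_of_prefix (h : Adjacent x y) (hx : v ++ [γ] <+: x) (hy : v <+: y)
    (hne : y ≠ v) : v ++ [γ] <+: y := by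
  rcases h with rfl | ⟨δ, rfl⟩ | ⟨δ, rfl⟩
  · exact hx
  · exact hx.trans (List.prefix_append _ _)
  · rcases List.prefix_concat_iff.mp hx with heq | hx
    · exact absurd (List.append_inj_left' heq rfl).symm hne
    · exact hx

theorem eq_child (h : Adjacent y v) (hy : v ++ [γ] <+: y) : y = v ++ [γ] :=
  (hy.eq_of_length (by have := h.length_le; have := hy.length_le; simp at *; omega)).symm

end Adjacent

theorem inBag_of_node_eq {v : Node n} {a : Vtx n R} (h : a.1 = v) : inBag v a := Or.inl h

theorem inBag_child_of_node_eq {v : Node n} {a : Vtx n R} (γ : Fin n) (h : a.1 = v) :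
    inBag (v ++ [γ]) a :=
  Or.inr ⟨γ, by rw [h]⟩

def StaysBelow (v : Node n) (p : ℕ → Vtx n R) (a b : ℕ) : Prop :=
  ∀ i ∈ Set.Icc a b, v <+: (p i).1

theorem StaysBelow.mono {v : Node n} {p : ℕ → Vtx n R} {a b a' b' : ℕ}
    (h : StaysBelow v p a b) (ha : a ≤ a') (hb : b' ≤ b) : StaysBelow v p a' b' :=
  fun i hi => h i ⟨ha.trans hi.1, hi.2.trans hb⟩

end Nodes

section Words

def seqCons {α : Type*} (a : α) (f : ℕ → α) : ℕ → α
  | 0 => a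
  | i + 1 => f i

@[simp] theorem wpfx_zero (w : ℕ → Fin n) : wpfx w 0 = [] := rfl

theorem wpfx_succ (w : ℕ → Fin n) (i : ℕ) : wpfx w (i + 1) = wpfx w i ++ [w i] := by
  simp [wpfx, List.range_succ]

theorem wpfx_add (w : ℕ → Fin n) (i j : ℕ) :
    wpfx w (i + j) = wpfx w i ++ wpfx (fun k => w (i + k)) j := by
  induction j with
  | zero => simp
  | succ j ih => rw [← Nat.add_assoc, wpfx_succ, ih, wpfx_succ, List.append_assoc]

theorem wpfx_congr {w w' : ℕ → Fin n} {i : ℕ} (h : ∀ j < i, w j = w' j) :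
    wpfx w i = wpfx w' i :=
  List.map_congr_left fun j hj => h j (List.mem_range.mp hj)

theorem wpfx_seqCons_succ (γ : Fin n) (w : ℕ → Fin n) (i : ℕ) :
    wpfx (seqCons γ w) (i + 1) = [γ] ++ wpfx w i := by
  simp only [wpfx, List.range_succ_eq_map, List.map_cons, List.map_map]
  rfl

/-- Level `i` of a comb below `v` along `w` consists of the forward vertex
`(v ++ wpfx w i, X i)` and the backward vertex `(v ++ wpfx w i, Y i)`; `P` relates it to
level `i + 1`. -/
def AtLevel (P : Node n → Node n → R → R → R → R → Prop) (v : Node n) (w : ℕ → Fin n)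
    (X Y : ℕ → R) (i : ℕ) : Prop :=
  P (v ++ wpfx w i) (v ++ wpfx w (i + 1)) (X i) (Y i) (X (i + 1)) (Y (i + 1))

variable {P : Node n → Node n → R → R → R → R → Prop} {v : Node n} {w : ℕ → Fin n}
  {X Y : ℕ → R}

theorem atLevel_seqCons_zero {γ : Fin n} {x y : R} :
    AtLevel P v (seqCons γ w) (seqCons x X) (seqCons y Y) 0 ↔
      P v (v ++ [γ]) x y (X 0) (Y 0) := by
  simp [AtLevel, wpfx_seqCons_succ]
  rfl

theorem atLevel_seqCons_succ {γ : Fin n} {x y : R} {i : ℕ} :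
    AtLevel P v (seqCons γ w) (seqCons x X) (seqCons y Y) (i + 1) ↔
      AtLevel P (v ++ [γ]) w X Y i := by
  simp only [AtLevel, wpfx_seqCons_succ, ← List.append_assoc]
  rfl

theorem atLevel_add {s i : ℕ} :
    AtLevel P v w X Y (s + i) ↔
      AtLevel P (v ++ wpfx w s) (fun j => w (s + j)) (fun j => X (s + j))
        (fun j => Y (s + j)) i := by
  unfold AtLevel
  rw [Nat.add_assoc, wpfx_add w s i, wpfx_add w s (i + 1), List.append_assoc,
    List.append_assoc]

end Words

section Visits

variable [Fintype R] {p : ℕ → Vtx n R} {a b : ℕ} {v : Node n}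

theorem card_le_of_injOn (hinj : Set.InjOn p (Set.Icc a b)) {s : Finset ℕ}
    (hs : ∀ i ∈ s, i ∈ Set.Icc a b ∧ (p i).1 = v) : s.card ≤ Fintype.card R := by
  rw [← Finset.card_univ]
  refine Finset.card_le_card_of_injOn (fun i => (p i).2) (fun _ _ => Finset.mem_univ _) ?_
  intro i hi j hj hij
  exact hinj (hs i hi).1 (hs j hj).1 (Prod.ext ((hs i hi).2.trans (hs j hj).2.symm) hij)

theorem card_touching_le (hinj : Set.InjOn p (Set.Icc a b)) :
    ((Finset.Ico a b).filter fun j => (p j).1 = v ∨ (p (j + 1)).1 = v).card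
      ≤ 2 * Fintype.card R := by
  classical
  rw [Finset.filter_or, two_mul]
  refine (Finset.card_union_le _ _).trans (add_le_add ?_ ?_)
  · refine card_le_of_injOn (v := v) hinj fun i hi => ?_
    simp only [Finset.mem_filter, Finset.mem_Ico] at hi
    exact ⟨⟨hi.1.1, hi.1.2.le⟩, hi.2⟩
  · rw [← Finset.card_image_of_injective _ (add_left_injective 1)]
    refine card_le_of_injOn (v := v) hinj fun i hi => ?_
    simp only [Finset.mem_image, Finset.mem_filter, Finset.mem_Ico] at hi
    obtain ⟨j, ⟨⟨hj₁, hj₂⟩, hj⟩, rfl⟩ := hi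
    exact ⟨⟨by omega, hj₂⟩, hj⟩

end Visits

namespace Framified

section Bags

variable (G : Framified n R c₀ cα)

def Edge (a b : Vtx n R) : Prop := G.lt a b ∨ G.eqe a b

/-- A walk from `a` to `b` collapsed to at most one edge; `s` records that the walk used a
strict edge. -/
def Shortcut (s : Prop) (a b : Vtx n R) : Prop := (a = b ∨ G.Edge a b) ∧ (s → G.lt a b)

variable {G}

theorem Edge.adjacent {a b : Vtx n R} (h : G.Edge a b) : Adjacent a.1 b.1 :=
  G.local_edges a b h

theorem lt_irrefl (a : Vtx n R) : ¬ G.lt a a := fun h =>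
  G.no_bag_cycle a.1 ⟨1, fun _ => a, one_pos, rfl, fun _ _ => Or.inl h, ⟨0, one_pos, h⟩,
    fun _ _ => inBag_of_node_eq rfl⟩

variable {v : Node n} {a₁ a₂ a₃ : Vtx n R}

theorem not_strict_cycle₂ (h₁ : inBag v a₁) (h₂ : inBag v a₂)
    (e₁ : G.Edge a₁ a₂) (e₂ : G.Edge a₂ a₁) : ¬ (G.lt a₁ a₂ ∨ G.lt a₂ a₁) := by
  intro hlt
  refine G.no_bag_cycle v ⟨2, fun i => if i % 2 = 0 then a₁ else a₂, two_pos, rfl, ?_, ?_, ?_⟩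
  · intro i hi
    interval_cases i
    exacts [e₁, e₂]
  · rcases hlt with hlt | hlt
    exacts [⟨0, two_pos, hlt⟩, ⟨1, one_lt_two, hlt⟩]
  · intro i _
    dsimp only
    split_ifs
    exacts [h₁, h₂]

theorem not_strict_cycle₃ (h₁ : inBag v a₁) (h₂ : inBag v a₂) (h₃ : inBag v a₃)
    (e₁ : G.Edge a₁ a₂) (e₂ : G.Edge a₂ a₃) (e₃ : G.Edge a₃ a₁) :
    ¬ (G.lt a₁ a₂ ∨ G.lt a₂ a₃ ∨ G.lt a₃ a₁) := by
  intro hlt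
  refine G.no_bag_cycle v ⟨3, fun i => [a₁, a₂, a₃].getD (i % 3) a₁, three_pos, rfl, ?_, ?_, ?_⟩
  · intro i hi
    interval_cases i
    exacts [e₁, e₂, e₃]
  · rcases hlt with hlt | hlt | hlt
    exacts [⟨0, three_pos, hlt⟩, ⟨1, by norm_num, hlt⟩, ⟨2, by norm_num, hlt⟩]
  · intro i hi
    interval_cases i
    exacts [h₁, h₂, h₃, h₁]

namespace Shortcut

variable {s s₁ s₂ : Prop}

theorem of_edge (h : G.Edge a₁ a₂) : G.Shortcut (G.lt a₁ a₂) a₁ a₂ := ⟨Or.inr h, id⟩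

theorem refl (a : Vtx n R) (hs : ¬ s) : G.Shortcut s a a := ⟨Or.inl rfl, fun h => absurd h hs⟩

theorem mono (h : G.Shortcut s₁ a₁ a₂) (hs : s₂ → s₁) : G.Shortcut s₂ a₁ a₂ :=
  ⟨h.1, fun h' => h.2 (hs h')⟩

theorem edge (h : G.Shortcut s a₁ a₂) (hne : a₁ ≠ a₂) : G.Edge a₁ a₂ := h.1.resolve_left hne

theorem trans (h₁ : inBag v a₁) (h₂ : inBag v a₂) (h₃ : inBag v a₃)
    (l₁ : G.Shortcut s₁ a₁ a₂) (l₂ : G.Shortcut s₂ a₂ a₃) : G.Shortcut (s₁ ∨ s₂) a₁ a₃ := by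
  obtain ⟨rfl | e₁, hs₁⟩ := l₁
  · exact ⟨l₂.1, fun hs => hs.elim (fun h => absurd (hs₁ h) (lt_irrefl _)) l₂.2⟩
  obtain ⟨rfl | e₂, hs₂⟩ := l₂
  · exact ⟨Or.inr e₁, fun hs => hs.elim hs₁ (fun h => absurd (hs₂ h) (lt_irrefl _))⟩
  have hcyc : ∀ e₃ : G.Edge a₃ a₁, (s₁ ∨ s₂ ∨ G.lt a₃ a₁) → False := fun e₃ hs =>
    not_strict_cycle₃ h₁ h₂ h₃ e₁ e₂ e₃ (hs.imp hs₁ (Or.imp_left hs₂))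
  by_cases h13 : a₁ = a₃
  · subst h13
    exact ⟨Or.inl rfl, fun hs => (not_strict_cycle₂ h₁ h₂ e₁ e₂ (hs.imp hs₁ hs₂)).elim⟩
  rcases G.complete v a₁ a₃ h₁ h₃ h13 with h | h | h | h
  · exact ⟨Or.inr (Or.inl h), fun _ => h⟩
  · exact (hcyc (Or.inl h) (Or.inr (Or.inr h))).elim
  · exact ⟨Or.inr (Or.inr h), fun hs =>
      (hcyc (Or.inr (G.eq_symm v a₁ a₃ h₁ h₃ h13 h)) (hs.imp_right Or.inl)).elim⟩
  · exact ⟨Or.inr (Or.inr (G.eq_symm v a₃ a₁ h₃ h₁ (Ne.symm h13) h)), fun hs =>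
      (hcyc (Or.inr h) (hs.imp_right Or.inl)).elim⟩

end Shortcut

end Bags

section Walks

variable (G : Framified n R c₀ cα)

def IsWalkOn (p : ℕ → Vtx n R) (a b : ℕ) : Prop := ∀ i ∈ Set.Ico a b, G.Edge (p i) (p (i + 1))

def StrictOn (p : ℕ → Vtx n R) (a b : ℕ) : Prop := ∃ i ∈ Set.Ico a b, G.lt (p i) (p (i + 1))

open Classical in
noncomputable def strictCount (p : ℕ → Vtx n R) (a b : ℕ) : ℕ :=
  ((Finset.Ico a b).filter fun i => G.lt (p i) (p (i + 1))).card

variable {G} {p : ℕ → Vtx n R} {a b m t e : ℕ} {v : Node n} {γ : Fin n}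

theorem IsWalkOn.mono (h : G.IsWalkOn p a b) (ha : a ≤ m) (hb : t ≤ b) : G.IsWalkOn p m t :=
  fun i hi => h i ⟨ha.trans hi.1, hi.2.trans_le hb⟩

theorem not_strictOn_self : ¬ G.StrictOn p a a := fun ⟨_, hi, _⟩ => (Set.Ico_self a).subset hi

theorem strictOn_succ : G.StrictOn p a (a + 1) ↔ G.lt (p a) (p (a + 1)) := by
  refine ⟨fun ⟨i, ⟨hai, hia⟩, hlt⟩ => ?_, fun h => ⟨a, ⟨le_rfl, a.lt_succ_self⟩, h⟩⟩
  rwa [show i = a by omega] at hlt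

theorem strictOn_split (ham : a ≤ m) (hmb : m ≤ b) :
    G.StrictOn p a b ↔ G.StrictOn p a m ∨ G.StrictOn p m b := by
  constructor
  · rintro ⟨i, ⟨hai, hib⟩, hlt⟩
    rcases lt_or_ge i m with him | hmi
    exacts [Or.inl ⟨i, ⟨hai, him⟩, hlt⟩, Or.inr ⟨i, ⟨hmi, hib⟩, hlt⟩]
  · rintro (⟨i, ⟨hai, him⟩, hlt⟩ | ⟨i, ⟨hmi, hib⟩, hlt⟩)
    exacts [⟨i, ⟨hai, him.trans_le hmb⟩, hlt⟩, ⟨i, ⟨ham.trans hmi, hib⟩, hlt⟩]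

theorem strictLen_eq_strictCount (k : ℕ) :
    G.toCGraph.strictLen p k = G.strictCount p 0 k := by
  rw [CGraph.strictLen, strictCount, ← Set.ncard_coe_finset]
  congr 1
  ext i
  simp

theorem strictOn_of_strictCount_pos (h : 0 < G.strictCount p a b) : G.StrictOn p a b := by
  obtain ⟨i, hi⟩ := Finset.card_pos.mp h
  simp only [Finset.mem_filter, Finset.mem_Ico] at hi
  exact ⟨i, hi.1, hi.2⟩

theorem strictCount_le_of_not_strictOn (h₁ : ¬ G.StrictOn p a t) (h₂ : ¬ G.StrictOn p e b) :
    G.strictCount p a b ≤ G.strictCount p t e := by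
  refine Finset.card_le_card fun i hi => ?_
  simp only [Finset.mem_filter, Finset.mem_Ico] at hi ⊢
  refine ⟨⟨?_, ?_⟩, hi.2⟩
  · by_contra h
    exact h₁ ⟨i, ⟨hi.1.1, by omega⟩, hi.2⟩
  · by_contra h
    exact h₂ ⟨i, ⟨by omega, hi.1.2⟩, hi.2⟩

theorem IsWalkOn.staysBelow_child (hw : G.IsWalkOn p a b) (hbelow : StaysBelow v p a b)
    (ha : v ++ [γ] <+: (p a).1) (hne : ∀ i ∈ Set.Icc a b, (p i).1 ≠ v) :
    StaysBelow (v ++ [γ]) p a b := by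
  rintro i ⟨hai, hib⟩
  induction i, hai using Nat.le_induction with
  | base => exact ha
  | succ i hai ih =>
    exact (hw i ⟨hai, hib⟩).adjacent.prefix_of_prefix (ih (by omega)) (hbelow _ ⟨by omega, hib⟩)
      (hne _ ⟨by omega, hib⟩)

theorem IsWalkOn.exists_child_of_excursion (hw : G.IsWalkOn p t (e + 1))
    (hbelow : StaysBelow v p t (e + 1)) (ht : (p t).1 = v) (he : (p (e + 1)).1 = v)
    (hne : ∀ i ∈ Set.Icc (t + 1) e, (p i).1 ≠ v) (hte : t < e) :
    ∃ γ, (p (t + 1)).1 = v ++ [γ] ∧ (p e).1 = v ++ [γ] ∧ StaysBelow (v ++ [γ]) p (t + 1) e := by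
  have hadj := (hw t ⟨le_rfl, by omega⟩).adjacent
  rw [ht] at hadj
  obtain ⟨γ, hγ⟩ := hadj.exists_child (hbelow _ ⟨by omega, by omega⟩) (hne _ ⟨le_rfl, by omega⟩)
  have hsub := (hw.mono (m := t + 1) (t := e) (by omega) (by omega)).staysBelow_child
    (hbelow.mono (by omega) (by omega)) (by rw [hγ]) hne
  have hadj' := (hw e ⟨by omega, by omega⟩).adjacent
  rw [he] at hadj'
  exact ⟨γ, hγ, hadj'.eq_child (hsub e ⟨by omega, le_rfl⟩), hsub⟩

theorem IsWalkOn.shortcut (hw : G.IsWalkOn p a b) (hab : a ≤ b) (hbelow : StaysBelow v p a b)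
    (ha : (p a).1 = v) (hb : (p b).1 = v) : G.Shortcut (G.StrictOn p a b) (p a) (p b) := by
  induction hd : b - a using Nat.strong_induction_on generalizing a b v with
  | _ d ih =>
  rcases hab.eq_or_lt with rfl | hab
  · exact Shortcut.refl _ not_strictOn_self
  obtain ⟨j, haj, hjb, hj, hfirst⟩ := exists_first_after (P := fun i => (p i).1 = v) hab hb
  have htail := ih (b - j) (by omega) (hw.mono (by omega) le_rfl) hjb
    (hbelow.mono (by omega) le_rfl) hj hb rfl
  have hhead : G.Shortcut (G.StrictOn p a j) (p a) (p j) := by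
    rcases (Nat.succ_le_of_lt haj).eq_or_lt with rfl | hj2
    · exact (Shortcut.of_edge (hw a ⟨le_rfl, hab⟩)).mono strictOn_succ.mp
    obtain ⟨e, rfl⟩ : ∃ e, j = e + 1 := ⟨j - 1, by omega⟩
    obtain ⟨γ, h₁, h₂, hsub⟩ := (hw.mono le_rfl hjb).exists_child_of_excursion
      (hbelow.mono le_rfl hjb) ha hj (fun i ⟨hi₁, hi₂⟩ => hfirst i (by omega) (by omega))
      (by omega)
    have hmid := ih (e - (a + 1)) (by omega) (hw.mono (by omega) (by omega)) (by omega) hsub h₁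
      h₂ rfl
    have hB := fun {c : Vtx n R} (h : c.1 = v) => inBag_child_of_node_eq (R := R) γ h
    have hlink := (Shortcut.of_edge (hw a ⟨le_rfl, hab⟩)).trans (hB ha) (inBag_of_node_eq h₁)
      (hB hj) (hmid.trans (inBag_of_node_eq h₁) (inBag_of_node_eq h₂) (hB hj)
        (Shortcut.of_edge (hw e ⟨by omega, by omega⟩)))
    refine hlink.mono fun hs => ?_
    rwa [strictOn_split (m := a + 1) (by omega) (by omega), strictOn_succ,
      strictOn_split (m := e) (by omega) (by omega), strictOn_succ] at hs
  exact (hhead.trans (inBag_of_node_eq ha) (inBag_of_node_eq hj) (inBag_of_node_eq hb)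
    htail).mono (strictOn_split haj.le hjb).mp

theorem IsWalkOn.shortcut_descend (hw : G.IsWalkOn p a (t + 1)) (hat : a ≤ t)
    (hbelow : StaysBelow v p a t) (ha : (p a).1 = v) (ht : (p t).1 = v)
    (ht' : (p (t + 1)).1 = v ++ [γ]) :
    G.Shortcut (G.StrictOn p a (t + 1)) (p a) (p (t + 1)) := by
  have hB := fun {c : Vtx n R} (h : c.1 = v) => inBag_child_of_node_eq (R := R) γ h
  refine (((hw.mono le_rfl t.le_succ).shortcut hat hbelow ha ht).trans (hB ha) (hB ht)
    (inBag_of_node_eq ht') (Shortcut.of_edge (hw t ⟨hat, t.lt_succ_self⟩))).mono fun hs => ?_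
  rwa [strictOn_split hat t.le_succ, strictOn_succ] at hs

theorem IsWalkOn.shortcut_ascend (hw : G.IsWalkOn p e b) (heb : e < b)
    (hbelow : StaysBelow v p (e + 1) b) (he : (p e).1 = v ++ [γ]) (he' : (p (e + 1)).1 = v)
    (hb : (p b).1 = v) : G.Shortcut (G.StrictOn p e b) (p e) (p b) := by
  have hB := fun {c : Vtx n R} (h : c.1 = v) => inBag_child_of_node_eq (R := R) γ h
  refine ((Shortcut.of_edge (hw e ⟨le_rfl, heb⟩)).trans (inBag_of_node_eq he) (hB he') (hB hb)
    ((hw.mono e.le_succ le_rfl).shortcut heb hbelow he' hb)).mono fun hs => ?_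
  rwa [strictOn_split e.le_succ heb, strictOn_succ] at hs

open Classical in
theorem strictCount_le_card_away_add [Fintype R] (hinj : Set.InjOn p (Set.Icc a b)) :
    G.strictCount p a b ≤ ((Finset.Ico a b).filter fun j =>
      G.lt (p j) (p (j + 1)) ∧ (p j).1 ≠ v ∧ (p (j + 1)).1 ≠ v).card + 2 * Fintype.card R := by
  classical
  refine (Finset.card_le_card fun j hj => ?_).trans ((Finset.card_union_le _ _).trans
    (add_le_add le_rfl (card_touching_le (v := v) hinj)))
  simp only [Finset.mem_union, Finset.mem_filter] at hj ⊢
  by_cases h : (p j).1 = v ∨ (p (j + 1)).1 = v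
  · exact Or.inr ⟨hj.1, h⟩
  · exact Or.inl ⟨hj.1, hj.2, not_or.mp h⟩

/-- Strict steps touching `v` are at most `2 |R|`; the others are shared among at most `|R|`
excursions below `v` (grouped by their last visit to `v`), so one excursion carries more than
`M` of them. -/
theorem exists_excursion [Fintype R] {M : ℕ} (hinj : Set.InjOn p (Set.Icc a b))
    (ha : (p a).1 = v) (hb : (p b).1 = v)
    (hM : Fintype.card R * M + 2 * Fintype.card R < G.strictCount p a b) :
    ∃ t e, a ≤ t ∧ t < e ∧ e < b ∧ (p t).1 = v ∧ (p (e + 1)).1 = v ∧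
      (∀ i ∈ Set.Icc (t + 1) e, (p i).1 ≠ v) ∧ M < G.strictCount p (t + 1) e := by
  classical
  set away := (Finset.Ico a b).filter fun j =>
    G.lt (p j) (p (j + 1)) ∧ (p j).1 ≠ v ∧ (p (j + 1)).1 ≠ v
  set visits := (Finset.Ico a b).filter fun i => (p i).1 = v
  let last := Nat.findGreatest fun i => a ≤ i ∧ (p i).1 = v
  have hvisits : visits.card ≤ Fintype.card R := card_le_of_injOn hinj fun i hi => by
    simp only [visits, Finset.mem_filter, Finset.mem_Ico] at hi
    exact ⟨⟨hi.1.1, hi.1.2.le⟩, hi.2⟩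
  have hlast : ∀ j ∈ away, last j ∈ visits ∧ last j ≤ j := by
    intro j hj
    simp only [away, Finset.mem_filter, Finset.mem_Ico] at hj
    have hspec : a ≤ last j ∧ (p (last j)).1 = v := Nat.findGreatest_spec
      (P := fun i => a ≤ i ∧ (p i).1 = v) hj.1.1 ⟨le_rfl, ha⟩
    have hle : last j ≤ j := Nat.findGreatest_le j
    simp only [visits, Finset.mem_filter, Finset.mem_Ico]
    exact ⟨⟨⟨hspec.1, by omega⟩, hspec.2⟩, hle⟩
  obtain ⟨t, ht, hfib⟩ := Finset.exists_lt_card_fiber_of_mul_lt_card_of_maps_to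
    (fun j hj => (hlast j hj).1) (n := M)
    (by have := strictCount_le_card_away_add (G := G) (v := v) hinj; nlinarith)
  simp only [visits, Finset.mem_filter, Finset.mem_Ico] at ht
  obtain ⟨⟨hat, htb⟩, ht⟩ := ht
  obtain ⟨e₁, hte, heb, he, hfirst⟩ := exists_first_after (P := fun i => (p i).1 = v) htb hb
  obtain ⟨e, rfl⟩ : ∃ e, e₁ = e + 1 := ⟨e₁ - 1, by omega⟩
  have hfib_sub : away.filter (fun j => last j = t) ⊆
      (Finset.Ico (t + 1) e).filter fun i => G.lt (p i) (p (i + 1)) := by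
    intro j hj
    obtain ⟨hlastv, hjle⟩ := hlast j (Finset.mem_filter.mp hj).1
    have hlastv := (Finset.mem_filter.mp hlastv).2
    simp only [away, Finset.mem_filter, Finset.mem_Ico] at hj ⊢
    obtain ⟨⟨⟨haj, hjb⟩, hlt, hjv, hj1v⟩, rfl⟩ := hj
    have hjt : last j ≠ j := fun h => hjv (h ▸ hlastv)
    have hje : j < e + 1 := by
      by_contra! h
      have : e + 1 ≤ last j := Nat.le_findGreatest h ⟨by omega, he⟩
      omega
    exact ⟨⟨by omega, lt_of_le_of_ne (by omega) fun h => hj1v (h ▸ he)⟩, hlt⟩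
  have hMe : M < G.strictCount p (t + 1) e := hfib.trans_le (Finset.card_le_card hfib_sub)
  have hte' : t < e := by
    by_contra! h
    simp [strictCount, Finset.Ico_eq_empty_of_le (show e ≤ t + 1 by omega)] at hMe
  exact ⟨t, e, hat, hte', by omega, ht, he, fun i ⟨hi₁, hi₂⟩ => hfirst i (by omega) (by omega),
    hMe⟩

end Walks

section Combs

variable (G : Framified n R c₀ cα)

def Rung (m m' : Node n) (x y x' y' : R) : Prop :=
  G.lt (m, x) (m, y) ∧ G.Edge (m, x) (m', x') ∧ G.Edge (m', y') (m, y)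

def StrictRung (m m' : Node n) (x y x' y' : R) : Prop :=
  G.lt (m, x) (m', x') ∨ G.lt (m', y') (m, y)

def HasComb (v : Node n) (x y : R) (σ : ℕ) : Prop :=
  ∃ (w : ℕ → Fin n) (X Y : ℕ → R) (k : ℕ) (L : Finset ℕ), X 0 = x ∧ Y 0 = y ∧
    (∀ i < k, AtLevel G.Rung v w X Y i) ∧ σ ≤ L.card ∧
    ∀ i ∈ L, i < k ∧ AtLevel G.StrictRung v w X Y i

variable {G} {v : Node n} {γ : Fin n} {x y x' y' : R} {σ : ℕ}

theorem hasComb_zero (γ : Fin n) : G.HasComb v x y 0 :=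
  ⟨fun _ => γ, fun _ => x, fun _ => y, 0, ∅, rfl, rfl, by simp, le_rfl, by simp⟩

theorem HasComb.exists_seqCons (hrung : G.Rung v (v ++ [γ]) x y x' y')
    (h : G.HasComb (v ++ [γ]) x' y' σ) :
    ∃ (w : ℕ → Fin n) (X Y : ℕ → R) (k : ℕ) (L : Finset ℕ), X 0 = x' ∧ Y 0 = y' ∧
      (∀ i < k + 1, AtLevel G.Rung v (seqCons γ w) (seqCons x X) (seqCons y Y) i) ∧
      σ ≤ L.card ∧ 0 ∉ L ∧
      ∀ i ∈ L, i < k + 1 ∧ AtLevel G.StrictRung v (seqCons γ w) (seqCons x X) (seqCons y Y) i := by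
  obtain ⟨w, X, Y, k, L, hX, hY, hcomb, hL, hLk⟩ := h
  refine ⟨w, X, Y, k, L.map ⟨(· + 1), add_left_injective 1⟩, hX, hY, ?_, by simpa using hL,
    by simp, ?_⟩
  · rintro (_ | i) hi
    exacts [atLevel_seqCons_zero.mpr (hX ▸ hY ▸ hrung),
      atLevel_seqCons_succ.mpr (hcomb i (by omega))]
  · simp only [Finset.mem_map, Function.Embedding.coeFn_mk]
    rintro _ ⟨i, hi, rfl⟩
    exact ⟨by have := (hLk i hi).1; omega, atLevel_seqCons_succ.mpr (hLk i hi).2⟩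

theorem HasComb.cons (hrung : G.Rung v (v ++ [γ]) x y x' y')
    (h : G.HasComb (v ++ [γ]) x' y' σ) : G.HasComb v x y σ := by
  obtain ⟨w, X, Y, k, L, -, -, hcomb, hL, -, hLk⟩ := h.exists_seqCons hrung
  exact ⟨_, _, _, k + 1, L, rfl, rfl, hcomb, hL, hLk⟩

theorem HasComb.cons_strict (hrung : G.Rung v (v ++ [γ]) x y x' y')
    (hs : G.StrictRung v (v ++ [γ]) x y x' y') (h : G.HasComb (v ++ [γ]) x' y' σ) :
    G.HasComb v x y (σ + 1) := by
  obtain ⟨w, X, Y, k, L, hX, hY, hcomb, hL, h0, hLk⟩ := h.exists_seqCons hrung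
  refine ⟨_, _, _, k + 1, insert 0 L, rfl, rfl, hcomb,
    by rw [Finset.card_insert_of_notMem h0]; omega, ?_⟩
  simp only [Finset.mem_insert, forall_eq_or_imp]
  exact ⟨⟨by omega, atLevel_seqCons_zero.mpr (hX ▸ hY ▸ hs)⟩, hLk⟩

variable {p : ℕ → Vtx n R} {a b t e : ℕ}

theorem IsWalkOn.rung_of_excursion (hw : G.IsWalkOn p a b) (hbelow : StaysBelow v p a b)
    (ha : p a = (v, x)) (hb : p b = (v, y)) (hstrict : G.StrictOn p a b) (hat : a ≤ t)
    (hte : t < e) (heb : e < b) (ht : (p t).1 = v) (he : (p (e + 1)).1 = v)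
    (h₁ : p (t + 1) = (v ++ [γ], x')) (h₂ : p e = (v ++ [γ], y')) :
    G.Rung v (v ++ [γ]) x y x' y' ∧
      (G.StrictOn p a (t + 1) ∨ G.StrictOn p e b → G.StrictRung v (v ++ [γ]) x y x' y') := by
  have hdown := (hw.mono le_rfl (t := t + 1) (by omega)).shortcut_descend hat
    (hbelow.mono le_rfl (by omega)) (by rw [ha]) ht (by rw [h₁])
  have hup := (hw.mono (m := e) (by omega) le_rfl).shortcut_ascend heb
    (hbelow.mono (by omega) le_rfl) (by rw [h₂]) he (by rw [hb])
  have htooth := (hw.shortcut (by omega) hbelow (by rw [ha]) (by rw [hb])).2 hstrict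
  rw [ha, h₁] at hdown
  rw [hb, h₂] at hup
  rw [ha, hb] at htooth
  have hne : ∀ z z' : R, (v, z) ≠ (v ++ [γ], z') := by simp
  exact ⟨⟨htooth, hdown.edge (hne _ _), hup.edge (hne _ _).symm⟩, Or.imp hdown.2 hup.2⟩

variable [Fintype R]

/-- Descend into the excursion given by `exists_excursion`: if the walk is strict outside it,
the current rung is strict and the excursion still carries `(3|R|)^σ` strict steps; otherwise
the excursion carries all strict steps of the walk. -/
theorem IsWalkOn.hasComb (σ : ℕ) (hw : G.IsWalkOn p a b) (hinj : Set.InjOn p (Set.Icc a b))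
    (hbelow : StaysBelow v p a b) (ha : p a = (v, x)) (hb : p b = (v, y))
    (hS : (3 * Fintype.card R) ^ (σ + 1) ≤ G.strictCount p a b) : G.HasComb v x y σ := by
  induction hd : b - a using Nat.strong_induction_on generalizing a b v x y σ with
  | _ d ih =>
  set c := Fintype.card R
  have hc : 0 < c := Fintype.card_pos_iff.mpr ⟨x⟩
  have hbound : c * ((3 * c) ^ σ - 1) + 2 * c < (3 * c) ^ (σ + 1) := by
    have hP : 1 ≤ (3 * c) ^ σ := Nat.one_le_pow _ _ (by omega)
    have h₁ : c * ((3 * c) ^ σ - 1) = c * (3 * c) ^ σ - c := by rw [Nat.mul_sub_one]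
    have h₂ : (3 * c) ^ (σ + 1) = 3 * (c * (3 * c) ^ σ) := by ring
    have h₃ : c ≤ c * (3 * c) ^ σ := Nat.le_mul_of_pos_right c hP
    omega
  obtain ⟨t, e, hat, hte, heb, ht, he, hne, hM⟩ :=
    exists_excursion hinj (by rw [ha]) (by rw [hb]) (hbound.trans_le hS)
  obtain ⟨γ, h₁, h₂, hsub⟩ := (hw.mono hat (t := e + 1) (by omega)).exists_child_of_excursion
    (hbelow.mono hat (by omega)) ht he hne hte
  cases σ with
  | zero => exact hasComb_zero γ
  | succ σ =>
  have hrung := hw.rung_of_excursion hbelow ha hb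
    (strictOn_of_strictCount_pos ((Nat.pos_of_ne_zero (by positivity)).trans_le hS)) hat hte
    heb ht he (Prod.ext h₁ rfl) (Prod.ext h₂ rfl)
  have hinner := fun σ' (hσ' : (3 * c) ^ (σ' + 1) ≤ G.strictCount p (t + 1) e) =>
    ih (e - (t + 1)) (by omega) σ' (hw.mono (by omega) (by omega))
      (hinj.mono (Set.Icc_subset_Icc (by omega) (by omega))) hsub (Prod.ext h₁ rfl)
      (Prod.ext h₂ rfl) hσ' rfl
  by_cases hout : G.StrictOn p a (t + 1) ∨ G.StrictOn p e b
  · exact (hinner σ (by omega)).cons_strict hrung.1 (hrung.2 hout)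
  · rw [not_or] at hout
    exact (hinner (σ + 1) (hS.trans (strictCount_le_of_not_strictOn hout.1 hout.2))).cons hrung.1

end Combs

section Pumping

variable {G : Framified n R c₀ cα} {A B u : Node n}

theorem lt_append_iff (h : subtreeAt G A = subtreeAt G B) (m m' : Node n) (z z' : R) :
    G.lt (A ++ m, z) (A ++ m', z') ↔ G.lt (B ++ m, z) (B ++ m', z') :=
  Iff.of_eq (congrFun₂ (congrArg Prod.fst h) (m, z) (m', z'))

theorem eqe_append_iff (h : subtreeAt G A = subtreeAt G B) (m m' : Node n) (z z' : R) :
    G.eqe (A ++ m, z) (A ++ m', z') ↔ G.eqe (B ++ m, z) (B ++ m', z') :=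
  Iff.of_eq (congrFun₂ (congrArg (fun T => T.2.1) h) (m, z) (m', z'))

theorem rung_append_iff (h : subtreeAt G A = subtreeAt G B) {m m' : Node n} {x y x' y' : R} :
    G.Rung (A ++ m) (A ++ m') x y x' y' ↔ G.Rung (B ++ m) (B ++ m') x y x' y' := by
  simp only [Rung, Edge, lt_append_iff h, eqe_append_iff h]

theorem subtreeAt_append (h : subtreeAt G A = subtreeAt G B) (m : Node n) :
    subtreeAt G (A ++ m) = subtreeAt G (B ++ m) := by
  have hlab := congrArg (fun T => T.2.2) h
  simp only [subtreeAt] at hlab ⊢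
  simp only [List.append_assoc, lt_append_iff h, eqe_append_iff h]
  rw [show (fun a : Vtx n R => G.lab (A ++ (m ++ a.1), a.2)) =
      fun a => G.lab (B ++ (m ++ a.1), a.2) from
    funext fun a => congrFun hlab (m ++ a.1, a.2)]

theorem atLevel_periodic {P : Node n → Node n → R → R → R → R → Prop}
    (hP : ∀ {A m m' x y x' y'}, subtreeAt G A = subtreeAt G u →
      P (u ++ m) (u ++ m') x y x' y' → P (A ++ m) (A ++ m') x y x' y')
    {w : ℕ → Fin n} {X Y : ℕ → R} {L r : ℕ}
    (hsub : subtreeAt G (u ++ wpfx w L) = subtreeAt G u) (hX : X L = X 0) (hY : Y L = Y 0)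
    (hr : r < L) (h : AtLevel P u w X Y r) (q : ℕ) :
    AtLevel P u (fun j => w (j % L)) (fun j => X (j % L)) (fun j => Y (j % L)) (L * q + r) := by
  have hmod : ∀ q j, j < L → (L * q + j) % L = j := fun q j hj => by
    rw [Nat.mul_add_mod, Nat.mod_eq_of_lt hj]
  have hnode : ∀ q j, j ≤ L →
      wpfx (fun j => w (j % L)) (L * q + j) = wpfx (fun j => w (j % L)) (L * q) ++ wpfx w j :=
    fun q j hj => by
      rw [wpfx_add]
      exact congrArg _ (wpfx_congr fun i hi => congrArg w (hmod q i (by omega)))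
  have hbase : ∀ q, subtreeAt G (u ++ wpfx (fun j => w (j % L)) (L * q)) = subtreeAt G u := by
    intro q
    induction q with
    | zero => simp
    | succ q ih => rw [Nat.mul_succ, hnode q L le_rfl, ← List.append_assoc,
        subtreeAt_append ih, hsub]
  have hreg : ∀ Z : ℕ → R, Z L = Z 0 → ∀ j ≤ L, Z ((L * q + j) % L) = Z j := by
    intro Z hZ j hj
    rcases hj.lt_or_eq with hj | rfl
    · rw [hmod q j hj]
    · rw [← Nat.mul_succ, Nat.mul_mod_right, hZ]
  unfold AtLevel at h ⊢
  beta_reduce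
  rw [Nat.add_assoc, hnode q r hr.le, hnode q (r + 1) hr, ← List.append_assoc,
    ← List.append_assoc, hreg X hX r hr.le, hreg X hX (r + 1) hr, hreg Y hY r hr.le,
    hreg Y hY (r + 1) hr]
  exact hP (hbase q) h

theorem starViol_of_periodic {w : ℕ → Fin n} {X Y : ℕ → R} {L : ℕ} (hL : 0 < L)
    (hcomb : ∀ i < L, AtLevel G.Rung u w X Y i) (hstrict : AtLevel G.StrictRung u w X Y 0)
    (hsub : subtreeAt G (u ++ wpfx w L) = subtreeAt G u) (hX : X L = X 0) (hY : Y L = Y 0) :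
    StarViol G.lt G.eqe := by
  have hrung : ∀ i, AtLevel G.Rung u (fun j => w (j % L)) (fun j => X (j % L))
      (fun j => Y (j % L)) i := fun i => by
    rw [← Nat.div_add_mod i L]
    exact atLevel_periodic (fun hA => (rung_append_iff hA).mpr) hsub hX hY (Nat.mod_lt _ hL)
      (hcomb _ (Nat.mod_lt _ hL)) _
  refine ⟨u, X 0, Y 0, fun j => w (j % L), fun i => (u ++ wpfx (fun j => w (j % L)) i, X (i % L)),
    fun i => (u ++ wpfx (fun j => w (j % L)) i, Y (i % L)), by simp, by simp, fun _ => rfl,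
    fun _ => rfl, fun i => (hrung i).2.1, fun i => (hrung i).2.2, fun i => (hrung i).1, ?_⟩
  rcases hstrict with h | h
  · refine Or.inl fun N => ⟨L * N, Nat.le_mul_of_pos_left N hL, ?_⟩
    exact atLevel_periodic (P := fun m m' x _ x' _ => G.lt (m, x) (m', x'))
      (fun hA => (lt_append_iff hA _ _ _ _).mpr) hsub hX hY hL h N
  · refine Or.inr fun N => ⟨L * N, Nat.le_mul_of_pos_left N hL, ?_⟩
    exact atLevel_periodic (P := fun m m' _ y _ y' => G.lt (m', y') (m, y))
      (fun hA => (lt_append_iff hA _ _ _ _).mpr) hsub hX hY hL h N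

theorem starViol_of_repeat {v : Node n} {w : ℕ → Fin n} {X Y : ℕ → R} {k s t : ℕ}
    (hcomb : ∀ i < k, AtLevel G.Rung v w X Y i) (hst : s < t) (htk : t ≤ k)
    (hstrict : AtLevel G.StrictRung v w X Y s)
    (hrep : (subtreeAt G (v ++ wpfx w s), X s, Y s) = (subtreeAt G (v ++ wpfx w t), X t, Y t)) :
    StarViol G.lt G.eqe := by
  obtain ⟨L, rfl⟩ : ∃ L, t = s + L := ⟨t - s, by omega⟩
  simp only [Prod.mk.injEq] at hrep
  obtain ⟨hsub, hX, hY⟩ := hrep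
  refine starViol_of_periodic (u := v ++ wpfx w s) (by omega)
    (fun i hi => atLevel_add.mp (hcomb (s + i) (by omega))) ((atLevel_add (i := 0)).mp hstrict) ?_
    hX.symm hY.symm
  rw [List.append_assoc, ← wpfx_add]
  exact hsub.symm

end Pumping

end Framified

theorem repetitive_ell_infinite_violates_star_general (n : ℕ)
    (R : Type) [Fintype R] (c₀ cα : ℤ)
    (G : Framified n R c₀ cα) (hreg : Regular G)
    (u : Node n) (x y : R)
    (h : EllInf G u x y) :
    StarViol G.lt G.eqe := by
  classical
  set T := hreg.toFinset ×ˢ (Finset.univ : Finset R) ×ˢ (Finset.univ : Finset R)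
  obtain ⟨k, p, h0, hk, hw, hinj, hbelow, hlen⟩ := h ((3 * Fintype.card R) ^ (T.card + 2))
  obtain ⟨w, X, Y, m, L, -, -, hcomb, hL, hLm⟩ := Framified.IsWalkOn.hasComb (T.card + 1)
    (fun i hi => hw i hi.2) (fun i hi j hj => hinj i j hi.2 hj.2) (fun i hi => hbelow i hi.2)
    h0 hk (hlen.trans_eq (Framified.strictLen_eq_strictCount k))
  obtain ⟨s, hs, t, ht, hst, hrep⟩ := Finset.exists_ne_map_eq_of_card_lt_of_maps_to
    (s := L) (t := T) (by omega) (f := fun i => (subtreeAt G (u ++ wpfx w i), X i, Y i))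
    (fun i _ => Finset.mem_product.mpr ⟨(Set.Finite.mem_toFinset hreg).mpr ⟨_, rfl⟩, by simp⟩)
  rcases hst.lt_or_gt with hst | hst
  · exact Framified.starViol_of_repeat hcomb hst (hLm t ht).1.le (hLm s hs).2 hrep
  · exact Framified.starViol_of_repeat hcomb hst (hLm s hs).1.le (hLm t ht).2 hrep.symm

/-- if `G` is a regular framified constraint graph, `u` is in its
repetitive part and `ℓ((u,x),(u,y)) = ∞`, then `G` violates condition (★). -/
theorem repetitive_ell_infinite_violates_star (n : ℕ) (hn : 1 ≤ n)
    (R : Type) [Fintype R] [Nonempty R] (c₀ cα : ℤ) (hc : c₀ ≤ cα)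
    (G : Framified n R c₀ cα) (hreg : Regular G)
    (u : Node n) (hu : InRepetitive G u) (x y : R)
    (h : EllInf G u x y) :
    StarViol G.lt G.eqe :=
  repetitive_ell_infinite_violates_star_general n R c₀ cα G hreg u x y h

end ConstraintGraphs
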